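/- Boolean low-rank approximation under the disjointness mask: Let n = 2^m and identify each i ∈ [n] with its binary representation x(i) ∈ {0,1}^m. Let A ∈ {0,1}^{n×n} and let W ∈ {0,1}^{n×n} be defined by W_{i,j} = 0 if x(i) and x(j) share no common 1-coordinate (i.e., are disjoint), and W_{i,j} = 1 otherwise. Then for every k' ≥ 8k·m, if U ∈ {0,1}^{n×k'} and V ∈ {0,1}^{k'×n} satisfy ‖A ∘ W − U·V‖₀ ≤ (min over Û ∈ {0,1}^{n×k'}, V̂ ∈ {0,1}^{k'×n} of ‖A ∘ W − Û·V̂‖₀) + Δ for some Δ ≥ 0, then ‖(A − U·V) ∘ W‖₀ ≤ 8m·OPT + Δ, where OPT = min over Û ∈ {0,1}^{n×k}, V̂ ∈ {0,1}^{k×n} of ‖(A − Û·V̂) ∘ W‖₀. -/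

import Mathlib

/-!
The disjointness mask is itself a Boolean product, `W = X·Xᵀ` where the rows of `X` are the
vectors `x ∈ {0,1}^m`, so it has Boolean rank at most `m`. Boolean rank is submultiplicative
under the Hadamard product, so for every rank-`k` product `Û·V̂` the matrix `(Û·V̂) ∘ W` is a
product of rank `k·m ≤ k'`, and `‖A ∘ W − (Û·V̂) ∘ W‖₀ = ‖(A − Û·V̂) ∘ W‖₀`; hence the rank-`k'`
optimum for `A ∘ W` is at most `OPT`. Together with `‖(A − U·V) ∘ W‖₀ ≤ ‖A ∘ W − U·V‖₀` this
gives the bound with factor `1` in place of `8m` (for `m = 0` the mask vanishes).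
-/

open BigOperators

/-- Boolean matrix product over an index type `α`:
`(U·V)_{i,j} = 1` iff `∃ l, U_{i,l} = 1 ∧ V_{l,j} = 1`. -/
def bMul {α : Type*} {k : ℕ} (U : α → Fin k → Bool) (V : Fin k → α → Bool) :
    α → α → Bool :=
  fun i j => decide (∃ l, U i l = true ∧ V l j = true)

/-- Entrywise AND (Hadamard product of Boolean matrices). -/
def bHad {α : Type*} (M N : α → α → Bool) : α → α → Bool :=
  fun i j => M i j && N i j

/-- `‖M − N‖₀`: the number of entries where the Boolean matrices `M` and `N` differ. -/
def l0diff {α : Type*} [Fintype α] (M N : α → α → Bool) : ℕ :=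
  (Finset.univ.filter fun p : α × α => M p.1 p.2 ≠ N p.1 p.2).card

/-- `‖(M − N) ∘ W‖₀`: the number of entries in the support of `W` where `M` and `N` differ. -/
def l0maskdiff {α : Type*} [Fintype α] (W M N : α → α → Bool) : ℕ :=
  (Finset.univ.filter fun p : α × α =>
    W p.1 p.2 = true ∧ M p.1 p.2 ≠ N p.1 p.2).card

section BooleanMatrix

variable {α : Type*}

theorem exists_bMul_eq_bHad_bMul {k r : ℕ} (U : α → Fin k → Bool) (V : Fin k → α → Bool)
    (X : α → Fin r → Bool) (Y : Fin r → α → Bool) :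
    ∃ (U' : α → Fin (k * r) → Bool) (V' : Fin (k * r) → α → Bool),
      bMul U' V' = bHad (bMul U V) (bMul X Y) := by
  refine ⟨fun i q => U i (finProdFinEquiv.symm q).1 && X i (finProdFinEquiv.symm q).2,
    fun q j => V (finProdFinEquiv.symm q).1 j && Y (finProdFinEquiv.symm q).2 j, ?_⟩
  funext i j
  simp only [bMul, bHad, ← Bool.decide_and]
  refine decide_eq_decide.mpr ?_
  simp only [finProdFinEquiv.surjective.exists, Equiv.symm_apply_apply, Prod.exists,
    Bool.and_eq_true]
  constructor
  · rintro ⟨l, t, ⟨hU, hX⟩, hV, hY⟩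
    exact ⟨⟨l, hU, hV⟩, t, hX, hY⟩
  · rintro ⟨⟨l, hU, hV⟩, t, hX, hY⟩
    exact ⟨l, t, ⟨hU, hX⟩, hV, hY⟩

theorem exists_bMul_eq_bMul_of_le {k k' : ℕ} (hk : k ≤ k') (U : α → Fin k → Bool)
    (V : Fin k → α → Bool) :
    ∃ (U' : α → Fin k' → Bool) (V' : Fin k' → α → Bool), bMul U' V' = bMul U V := by
  refine ⟨fun i j => if h : (j : ℕ) < k then U i ⟨j, h⟩ else false,
    fun j i => if h : (j : ℕ) < k then V ⟨j, h⟩ i else false, ?_⟩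
  funext i j
  refine decide_eq_decide.mpr ⟨?_, ?_⟩
  · rintro ⟨l, hU, hV⟩
    by_cases hl : (l : ℕ) < k
    · simp only [dif_pos hl] at hU hV
      exact ⟨_, hU, hV⟩
    · simp [dif_neg hl] at hU
  · rintro ⟨l, hU, hV⟩
    exact ⟨Fin.castLE hk l, by simpa using hU, by simpa using hV⟩

variable [Fintype α]

theorem l0maskdiff_le_l0diff_bHad (W A N : α → α → Bool) :
    l0maskdiff W A N ≤ l0diff (bHad A W) N :=
  Finset.card_le_card <| Finset.monotone_filter_right _ fun p _ hp => by
    simpa [bHad, hp.1] using hp.2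

theorem l0diff_bHad_bHad (W A M : α → α → Bool) :
    l0diff (bHad A W) (bHad M W) = l0maskdiff W A M := by
  unfold l0diff l0maskdiff bHad
  congr 1
  refine Finset.filter_congr fun p _ => ?_
  cases W p.1 p.2 <;> simp

end BooleanMatrix

/-- Boolean low-rank approximation under the disjointness mask.
Here `n = 2^m` and each `i ∈ [n]` is identified with its binary representation,
i.e. matrices are indexed by `Fin m → Bool ≃ {0,1}^m`; `W x y = 0` iff `x` and `y`
are disjoint. -/
theorem stmt13
    {m k k' : ℕ}
    (A W : (Fin m → Bool) → (Fin m → Bool) → Bool)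
    (hW : ∀ x y : Fin m → Bool, W x y = true ↔ ∃ l, x l = true ∧ y l = true)
    (hk' : 8 * k * m ≤ k') (Δ : ℕ)
    (U : (Fin m → Bool) → Fin k' → Bool) (V : Fin k' → (Fin m → Bool) → Bool)
    (hUV : l0diff (bHad A W) (bMul U V) ≤
      sInf {x : ℕ | ∃ (U' : (Fin m → Bool) → Fin k' → Bool)
          (V' : Fin k' → (Fin m → Bool) → Bool),
        x = l0diff (bHad A W) (bMul U' V')} + Δ) :
    l0maskdiff W A (bMul U V) ≤
      8 * m * sInf {x : ℕ | ∃ (U' : (Fin m → Bool) → Fin k → Bool)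
          (V' : Fin k → (Fin m → Bool) → Bool),
        x = l0maskdiff W A (bMul U' V')} + Δ := by
  rcases Nat.eq_zero_or_pos m with rfl | hm
  · simp [l0maskdiff, hW]
  set OPT' := sInf {x : ℕ | ∃ (U' : (Fin m → Bool) → Fin k' → Bool)
    (V' : Fin k' → (Fin m → Bool) → Bool), x = l0diff (bHad A W) (bMul U' V')}
  set S := {x : ℕ | ∃ (U' : (Fin m → Bool) → Fin k → Bool)
    (V' : Fin k → (Fin m → Bool) → Bool), x = l0maskdiff W A (bMul U' V')}
  obtain ⟨U₀, V₀, hopt⟩ := Nat.sInf_mem (s := S) ⟨_, fun _ _ => false, fun _ _ => false, rfl⟩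
  have hW_bMul : bMul (fun x l => x l) (fun l y => y l) = W := by
    funext x y
    simp [bMul, ← hW]
  obtain ⟨U₁, V₁, hUV₁⟩ := exists_bMul_eq_bHad_bMul U₀ V₀ (fun x l => x l) (fun l y => y l)
  rw [hW_bMul] at hUV₁
  have hkm : k * m ≤ k' := by rw [mul_assoc] at hk'; omega
  obtain ⟨U₂, V₂, hUV₂⟩ := exists_bMul_eq_bMul_of_le hkm U₁ V₁
  have hOPT' : OPT' ≤ sInf S := by
    rw [hopt, ← l0diff_bHad_bHad, ← hUV₁, ← hUV₂]
    exact Nat.sInf_le ⟨U₂, V₂, rfl⟩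
  calc l0maskdiff W A (bMul U V) ≤ l0diff (bHad A W) (bMul U V) :=
        l0maskdiff_le_l0diff_bHad W A _
    _ ≤ OPT' + Δ := hUV
    _ ≤ 8 * m * sInf S + Δ := by gcongr; exact hOPT'.trans (Nat.le_mul_of_pos_left _ (by omega))
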